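/- Let L be a frame and let f = (u, v) be a pair satisfying (R1)–(R4) which is nonnegative (v 0 = ⊥, equivalently u p = ⊤ for all p < 0) and such that u r is complemented for every r ∈ ℚ and, moreover, for every sequence (r_m)_{m∈ℕ} of rationals the join ⨆_{m∈ℕ} u r_m is complemented in L. Define recursively a_1 := u 1 and f_1 := χ_{a_1}, and for k ≥ 2, a_k := ⨆_{t∈ℚ} (u t ⊓ v_{f_{k-1}}(t − 1/k)) and f_k := f_{k-1} + (1/k)·χ_{a_k}. Then each a_k is complemented, the sequence (f_k)_{k∈ℕ} is increasing with f_k ≤ f for all k (i.e. u_{f_k} p ≤ u p for all p), and u p = ⨆_{k∈ℕ} u_{f_k} p for every p ∈ ℚ; that is, f is the limit (= supremum) of the increasing sequence of nonnegative simple functions (f_k). -/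

import Mathlib

/-- A pair of maps `u, v : ℚ → L`, encoding a real-valued function on the frame `L`
via `f(p,—) = u p`, `f(—,q) = v q`. -/
structure MP (L : Type*) where
  u : ℚ → L
  v : ℚ → L

namespace MP

variable {L : Type*} [Order.Frame L]

/-- The order on pairs: `f ≤ g` iff `u_f p ≤ u_g p` and `v_g q ≤ v_f q` for all rationals. -/
def le (f g : MP L) : Prop :=
  (∀ p : ℚ, f.u p ≤ g.u p) ∧ (∀ q : ℚ, g.v q ≤ f.v q)

/-- The sum of two pairs. -/
noncomputable def add (f g : MP L) : MP L where
  u := fun p => ⨆ t : ℚ, f.u t ⊓ g.u (p - t)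
  v := fun q => ⨆ t : ℚ, f.v t ⊓ g.v (q - t)

/-- The join of two pairs. -/
def sup (f g : MP L) : MP L where
  u := fun p => f.u p ⊔ g.u p
  v := fun q => f.v q ⊓ g.v q

/-- The negation of a pair. -/
def neg (f : MP L) : MP L where
  u := fun p => f.v (-p)
  v := fun q => f.u (-q)

end MP

/-- The zero pair `𝟎`. -/
noncomputable def zeroMP (L : Type*) [Order.Frame L] : MP L where
  u := fun p => if p < 0 then ⊤ else ⊥
  v := fun q => if q ≤ 0 then ⊥ else ⊤

/-- The scaled characteristic pair `r·χ_a`, for a rational `r` and a complemented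
element `a` with complement `ac`. -/
noncomputable def sChi {L : Type*} [Order.Frame L] (r : ℚ) (a ac : L) : MP L where
  u := fun p =>
    if 0 < r then (if p < 0 then ⊤ else if p < r then a else ⊥)
    else if r = 0 then (if p < 0 then ⊤ else ⊥)
    else (if p < r then ⊤ else if p < 0 then ac else ⊥)
  v := fun q =>
    if 0 < r then (if q ≤ 0 then ⊥ else if q ≤ r then ac else ⊤)
    else if r = 0 then (if q ≤ 0 then ⊥ else ⊤)
    else (if q ≤ r then ⊥ else if q ≤ 0 then a else ⊤)

/-- Iterated sum of a finite list of pairs. -/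
noncomputable def sumMP {L : Type*} [Order.Frame L] : List (MP L) → MP L
  | [] => zeroMP L
  | [f] => f
  | f :: g :: fs => f.add (sumMP (g :: fs))

/-- A pair satisfies the defining relations (R1)–(R4) of the frame of extended reals. -/
def IsMeasPair {L : Type*} [Order.Frame L] (f : MP L) : Prop :=
  (∀ p q : ℚ, q ≤ p → f.u p ⊓ f.v q = ⊥) ∧
  (∀ p q : ℚ, p < q → f.u p ⊔ f.v q = ⊤) ∧
  (∀ p : ℚ, f.u p = ⨆ r : ℚ, ⨆ _ : p < r, f.u r) ∧
  (∀ q : ℚ, f.v q = ⨆ s : ℚ, ⨆ _ : s < q, f.v s)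

/-- The recursively defined sequence `(a_k, f_k)` (indexed so that index `k` corresponds
to stage `k+1`): `a_1 := u 1`, `f_1 := χ_{a_1}`, and for `k ≥ 2`,
`a_k := (f − f_{k−1})(1/k, —) = ⨆_t (u t ⊓ v_{f_{k−1}}(t − 1/k))`,
`f_k := f_{k−1} + (1/k)·χ_{a_k}` (the complement of `a_k` being its pseudocomplement,
which is its complement whenever `a_k` is complemented). -/
noncomputable def decompSeq {L : Type*} [Order.Frame L] (u : ℚ → L) : ℕ → L × MP L
  | 0 => (u 1, sChi 1 (u 1) (u 1)ᶜ)
  | k + 1 =>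
    let prev := decompSeq u k
    let a : L := ⨆ t : ℚ, u t ⊓ prev.2.v (t - 1 / ((k : ℚ) + 2))
    (a, prev.2.add (sChi (1 / ((k : ℚ) + 2)) a aᶜ))


/-!
Every approximant `f_k` is a nonnegative simple pair: `v_{f_k}` takes finitely many values,
all complemented. So the join `a = ⨆_t u t ⊓ v_{f_k}(t - δ)` regroups, along these values,
into finitely many pieces `c ⊓ ⨆_{t ∈ T} u t` with `T` countable, and is complemented.
For the limit, take `p < m < p'`. Where `f > p'` but `f_k < m`, every step whose size `δ`
is at most `p' - m` raises `f_k` by the full `δ`; the step sizes `1/(k+2)` have divergent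
sum, so there `f_k` eventually exceeds `m`, which covers `f > p'` by `f_k > p`.
-/

open Set Filter

theorem IsComplemented.isCompl_compl {α : Type*} [HeytingAlgebra α] {a : α}
    (h : IsComplemented a) : IsCompl a aᶜ := by
  obtain ⟨b, hb⟩ := h
  rwa [hb.compl_eq]

theorem isComplemented_biSup_of_forall_seq {ι L : Type*} [Countable ι] [CompleteLattice L]
    {x : ι → L} (hx : ∀ g : ℕ → ι, IsComplemented (⨆ m, x (g m))) (s : Set ι) :
    IsComplemented (⨆ i ∈ s, x i) := by
  rcases s.eq_empty_or_nonempty with rfl | hs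
  · simpa using isComplemented_bot
  · obtain ⟨g, rfl⟩ := s.to_countable.exists_eq_range hs
    rw [iSup_range]
    exact hx g

section Complemented

variable {L : Type*} [Order.Frame L]

theorem IsComplemented.biSup_of_finite {ι : Type*} {s : Set ι} (hs : s.Finite) {g : ι → L}
    (hg : ∀ i ∈ s, IsComplemented (g i)) : IsComplemented (⨆ i ∈ s, g i) := by
  rw [← hs.coe_toFinset, Finset.iSup_coe, ← Finset.sup_eq_iSup]
  exact Finset.sup_induction isComplemented_bot (fun _ ha _ hb => ha.sup hb)
    fun i hi => hg i (hs.mem_toFinset.1 hi)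

theorem isComplemented_iSup_inf_of_finite_range {ι : Type*} {x y : ι → L}
    (hx : ∀ s : Set ι, IsComplemented (⨆ i ∈ s, x i)) (hy : (range y).Finite)
    (hyc : ∀ i, IsComplemented (y i)) : IsComplemented (⨆ i, x i ⊓ y i) := by
  have hgroup : ⨆ i, x i ⊓ y i = ⨆ c ∈ range y, (⨆ i ∈ y ⁻¹' {c}, x i) ⊓ c := by
    refine le_antisymm (iSup_le fun i => ?_) (iSup₂_le fun c _ => ?_)
    · exact le_iSup₂_of_le (y i) (mem_range_self i)
        (inf_le_inf_right _ (le_iSup₂_of_le i rfl le_rfl))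
    · rw [iSup₂_inf_eq]
      refine iSup₂_le fun i hi => le_iSup_of_le i ?_
      rw [mem_preimage, mem_singleton_iff] at hi
      rw [hi]
  rw [hgroup]
  exact .biSup_of_finite hy fun c ⟨i, hi⟩ => (hx _).inf (hi ▸ hyc i)

end Complemented

section RightContinuous

variable {ι L : Type*} [PartialOrder ι] [CompleteLattice L] {u : ι → L}

theorem antitone_of_eq_iSup_gt (h : ∀ p, u p = ⨆ s, ⨆ _ : p < s, u s) : Antitone u := by
  intro p q hpq
  rcases hpq.eq_or_lt with rfl | hlt
  · rfl
  · rw [h p]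
    exact le_iSup₂_of_le q hlt le_rfl

theorem monotone_of_eq_iSup_lt (h : ∀ q, u q = ⨆ s, ⨆ _ : s < q, u s) : Monotone u := by
  intro p q hpq
  rcases hpq.eq_or_lt with rfl | hlt
  · rfl
  · rw [h q]
    exact le_iSup₂_of_le p hlt le_rfl

theorem eq_iSup_gt_of_antitone (hu : Antitone u) (h : ∀ p, ∃ s, p < s ∧ u p ≤ u s)
    (p : ι) : u p = ⨆ s, ⨆ _ : p < s, u s := by
  obtain ⟨s, hps, hs⟩ := h p
  exact le_antisymm (le_iSup₂_of_le s hps hs) (iSup₂_le fun s hs => hu hs.le)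

theorem eq_iSup_lt_of_monotone (hu : Monotone u) (h : ∀ q, ∃ s, s < q ∧ u q ≤ u s)
    (q : ι) : u q = ⨆ s, ⨆ _ : s < q, u s := by
  obtain ⟨s, hsq, hs⟩ := h q
  exact le_antisymm (le_iSup₂_of_le s hsq hs) (iSup₂_le fun s hs => hu hs.le)

end RightContinuous

section ScaledCharacteristic

variable {L : Type*} [Order.Frame L] {F : MP L} {r : ℚ} {a c : L}

theorem sChi_u_of_pos (hr : 0 < r) (p : ℚ) :
    (sChi r a c).u p = if p < 0 then ⊤ else if p < r then a else ⊥ := by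
  simp [sChi, hr]

theorem sChi_v_of_pos (hr : 0 < r) (q : ℚ) :
    (sChi r a c).v q = if q ≤ 0 then ⊥ else if q ≤ r then c else ⊤ := by
  simp [sChi, hr]

theorem isMeasPair_sChi (hr : 0 < r) (h : IsCompl a c) : IsMeasPair (sChi r a c) := by
  have hu : Antitone (sChi r a c).u := by
    intro p q hpq
    simp only [sChi_u_of_pos hr]
    split_ifs <;> first | rfl | exact le_top | exact bot_le | (exfalso; linarith)
  have hv : Monotone (sChi r a c).v := by
    intro p q hpq
    simp only [sChi_v_of_pos hr]
    split_ifs <;> first | rfl | exact le_top | exact bot_le | (exfalso; linarith)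
  refine ⟨fun p q hqp => ?_, fun p q hpq => ?_, eq_iSup_gt_of_antitone hu fun p => ?_,
    eq_iSup_lt_of_monotone hv fun q => ?_⟩
  · rw [sChi_u_of_pos hr, sChi_v_of_pos hr]
    split_ifs <;> first | (exfalso; linarith) | simp | exact h.inf_eq_bot
  · rw [sChi_u_of_pos hr, sChi_v_of_pos hr]
    split_ifs <;> first | (exfalso; linarith) | simp | exact h.sup_eq_top
  · refine ⟨if p < 0 then p / 2 else if p < r then (p + r) / 2 else p + 1, ?_, ?_⟩
    · split_ifs <;> linarith
    · simp only [sChi_u_of_pos hr]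
      split_ifs <;> first | rfl | exact le_top | exact bot_le | (exfalso; linarith)
  · refine ⟨if q ≤ 0 then q - 1 else if q ≤ r then q / 2 else (q + r) / 2, ?_, ?_⟩
    · split_ifs <;> linarith
    · simp only [sChi_v_of_pos hr]
      split_ifs <;> first | rfl | exact le_top | exact bot_le | (exfalso; linarith)

theorem MP.add_sChi_u (hF : ∀ p, F.u p = ⨆ s, ⨆ _ : p < s, F.u s) (hr : 0 < r) (p : ℚ) :
    (F.add (sChi r a c)).u p = F.u p ⊔ (a ⊓ F.u (p - r)) := by
  have hu := antitone_of_eq_iSup_gt hF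
  refine le_antisymm (iSup_le fun t => ?_) (sup_le ?_ ?_)
  · rw [sChi_u_of_pos hr]
    split_ifs
    · exact le_sup_of_le_left (inf_le_left.trans (hu (by linarith)))
    · exact le_sup_of_le_right (by rw [inf_comm]; exact inf_le_inf_left a (hu (by linarith)))
    · simp
  · rw [hF p]
    refine iSup₂_le fun s hs => le_iSup_of_le s ?_
    rw [sChi_u_of_pos hr, if_pos (by linarith), inf_top_eq]
  · rw [hF (p - r), inf_iSup₂_eq]
    refine iSup₂_le fun s hs => le_iSup_of_le s ?_
    rw [inf_comm, sChi_u_of_pos hr]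
    split_ifs <;> first | exact inf_le_inf_left _ le_top | rfl | (exfalso; linarith)

theorem MP.add_sChi_v (hF : ∀ q, F.v q = ⨆ s, ⨆ _ : s < q, F.v s) (hr : 0 < r) (q : ℚ) :
    (F.add (sChi r a c)).v q = F.v (q - r) ⊔ (c ⊓ F.v q) := by
  have hv := monotone_of_eq_iSup_lt hF
  refine le_antisymm (iSup_le fun t => ?_) (sup_le ?_ ?_)
  · rw [sChi_v_of_pos hr]
    split_ifs
    · simp
    · exact le_sup_of_le_right (by rw [inf_comm]; exact inf_le_inf_left c (hv (by linarith)))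
    · exact le_sup_of_le_left (inf_le_left.trans (hv (by linarith)))
  · rw [hF (q - r)]
    refine iSup₂_le fun s hs => le_iSup_of_le s ?_
    rw [sChi_v_of_pos hr, if_neg (by linarith), if_neg (by linarith), inf_top_eq]
  · rw [hF q, inf_iSup₂_eq]
    refine iSup₂_le fun s hs => le_iSup_of_le s ?_
    rw [inf_comm, sChi_v_of_pos hr]
    split_ifs <;> first | exact inf_le_inf_left _ le_top | rfl | (exfalso; linarith)

theorem MP.le_add_sChi (hF : IsMeasPair F) (hr : 0 < r) : F.le (F.add (sChi r a c)) := by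
  refine ⟨fun p => ?_, fun q => ?_⟩
  · rw [MP.add_sChi_u hF.2.2.1 hr]
    exact le_sup_left
  · rw [MP.add_sChi_v hF.2.2.2 hr]
    exact sup_le (monotone_of_eq_iSup_lt hF.2.2.2 (by linarith)) inf_le_right

theorem IsMeasPair.add_sChi (hF : IsMeasPair F) (hr : 0 < r) (h : IsCompl a c) :
    IsMeasPair (F.add (sChi r a c)) := by
  obtain ⟨h1, h2, h3, h4⟩ := hF
  have hu := antitone_of_eq_iSup_gt h3
  have hv := monotone_of_eq_iSup_lt h4
  have hU := MP.add_sChi_u (a := a) (c := c) h3 hr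
  have hV := MP.add_sChi_v (a := a) (c := c) h4 hr
  refine ⟨fun p q hqp => ?_, fun p q hpq => ?_, fun p => ?_, fun q => ?_⟩
  · have hd : ∀ p q, q ≤ p → Disjoint (F.u p) (F.v q) := fun p q h =>
      disjoint_iff.2 (h1 p q h)
    rw [hU, hV, ← disjoint_iff]
    refine disjoint_sup_left.2
      ⟨disjoint_sup_right.2 ⟨?_, ?_⟩, disjoint_sup_right.2 ⟨?_, ?_⟩⟩
    · exact (hd p q hqp).mono_right (hv (by linarith))
    · exact (hd p q hqp).mono_right inf_le_right
    · exact (hd (p - r) (q - r) (by linarith)).mono_left inf_le_right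
    · exact h.disjoint.mono inf_le_left inf_le_left
  · have hsplit : F.v q ≤ (a ⊓ F.u (p - r)) ⊔ F.v (q - r) ⊔ (c ⊓ F.v q) := calc
      F.v q = (a ⊓ F.v q) ⊔ (c ⊓ F.v q) := by rw [← inf_sup_right, h.sup_eq_top, top_inf_eq]
      _ ≤ (a ⊓ (F.u (p - r) ⊔ F.v (q - r))) ⊔ (c ⊓ F.v q) := by
        rw [h2 (p - r) (q - r) (by linarith), inf_top_eq]
        exact sup_le_sup_right inf_le_left _
      _ ≤ _ := by
        rw [inf_sup_left]
        exact sup_le_sup_right (sup_le_sup_left inf_le_right _) _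
    rw [hU, hV, eq_top_iff, ← h2 p q hpq]
    refine sup_le (le_sup_of_le_left le_sup_left) (hsplit.trans ?_)
    exact sup_le (sup_le (le_sup_of_le_left le_sup_right) (le_sup_of_le_right le_sup_left))
      (le_sup_of_le_right le_sup_right)
  · refine le_antisymm ?_ (iSup₂_le fun s hs => ?_)
    · rw [hU p]
      refine sup_le ?_ ?_
      · rw [h3 p]
        exact iSup₂_mono fun s _ => (hU s).symm ▸ le_sup_left
      · rw [h3 (p - r), inf_iSup₂_eq]
        refine iSup₂_le fun s hs => le_iSup₂_of_le (s + r) (by linarith) ?_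
        rw [hU, add_sub_cancel_right]
        exact le_sup_right
    · rw [hU, hU]
      exact sup_le_sup (hu hs.le) (inf_le_inf_left _ (hu (by linarith)))
  · refine le_antisymm ?_ (iSup₂_le fun s hs => ?_)
    · rw [hV q]
      refine sup_le ?_ ?_
      · rw [h4 (q - r)]
        refine iSup₂_le fun s hs => le_iSup₂_of_le (s + r) (by linarith) ?_
        rw [hV, add_sub_cancel_right]
        exact le_sup_left
      · rw [h4 q, inf_iSup₂_eq]
        exact iSup₂_mono fun s _ => (hV s).symm ▸ le_sup_right
    · rw [hV, hV]
      exact sup_le_sup (hv (by linarith)) (inf_le_inf_left _ (hv hs.le))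

structure IsNonnegSimple (F : MP L) : Prop where
  isMeasPair : IsMeasPair F
  u_eq_top : ∀ p < 0, F.u p = ⊤
  finite_range_v : (range F.v).Finite
  isComplemented_v : ∀ q, IsComplemented (F.v q)

theorem isNonnegSimple_sChi (hr : 0 < r) (h : IsCompl a c) : IsNonnegSimple (sChi r a c) where
  isMeasPair := isMeasPair_sChi hr h
  u_eq_top p hp := by rw [sChi_u_of_pos hr, if_pos hp]
  finite_range_v := by
    refine (toFinite {⊥, c, ⊤}).subset ?_
    rintro _ ⟨q, rfl⟩
    rw [sChi_v_of_pos hr]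
    split_ifs <;> simp
  isComplemented_v q := by
    rw [sChi_v_of_pos hr]
    split_ifs
    exacts [isComplemented_bot, ⟨a, h.symm⟩, isComplemented_top]

theorem IsNonnegSimple.add_sChi (hF : IsNonnegSimple F) (hr : 0 < r) (h : IsCompl a c) :
    IsNonnegSimple (F.add (sChi r a c)) where
  isMeasPair := hF.isMeasPair.add_sChi hr h
  u_eq_top p hp := by rw [MP.add_sChi_u hF.isMeasPair.2.2.1 hr, hF.u_eq_top p hp, top_sup_eq]
  finite_range_v := by
    refine (hF.finite_range_v.image2 (fun x y => x ⊔ (c ⊓ y)) hF.finite_range_v).subset ?_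
    rintro _ ⟨q, rfl⟩
    exact ⟨_, mem_range_self (q - r), _, mem_range_self q,
      (MP.add_sChi_v hF.isMeasPair.2.2.2 hr q).symm⟩
  isComplemented_v q := by
    rw [MP.add_sChi_v hF.isMeasPair.2.2.2 hr]
    exact (hF.isComplemented_v _).sup (IsComplemented.inf ⟨a, h.symm⟩ (hF.isComplemented_v q))

end ScaledCharacteristic

theorem monotone_harmonic : Monotone harmonic :=
  monotone_nat_of_le_succ fun n => by
    rw [harmonic_succ]
    exact le_add_of_nonneg_right (by positivity)

theorem tendsto_harmonic_atTop : Tendsto harmonic atTop atTop := by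
  refine tendsto_atTop_atTop_of_monotone monotone_harmonic fun C => ?_
  obtain ⟨n, hn⟩ := exists_nat_ge (Real.exp C)
  refine ⟨n, Rat.cast_le.1 ((log_add_one_le_harmonic n).trans' ?_)⟩
  rw [Real.le_log_iff_exp_le (by positivity)]
  push_cast
  linarith

section Decomposition

variable {L : Type*} [Order.Frame L] {u : ℚ → L}

theorem decompSeq_succ_u {k : ℕ}
    (hR3 : ∀ p, (decompSeq u k).2.u p = ⨆ s, ⨆ _ : p < s, (decompSeq u k).2.u s) (p : ℚ) :
    (decompSeq u (k + 1)).2.u p = (decompSeq u k).2.u p ⊔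
      ((decompSeq u (k + 1)).1 ⊓ (decompSeq u k).2.u (p - 1 / ((k : ℚ) + 2))) :=
  MP.add_sChi_u hR3 (by positivity) p

theorem decompSeq_le_succ {k : ℕ} (hk : IsMeasPair (decompSeq u k).2) :
    (decompSeq u k).2.le (decompSeq u (k + 1)).2 :=
  MP.le_add_sChi hk (by positivity)

theorem decompSeq_isComplemented_isNonnegSimple
    (hseq : ∀ g : ℕ → ℚ, IsComplemented (⨆ m, u (g m))) (k : ℕ) :
    IsComplemented (decompSeq u k).1 ∧ IsNonnegSimple (decompSeq u k).2 := by
  induction k with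
  | zero =>
    have h1 : IsComplemented (u 1) := by simpa using hseq fun _ => 1
    exact ⟨h1, isNonnegSimple_sChi one_pos h1.isCompl_compl⟩
  | succ k ih =>
    have ha : IsComplemented (decompSeq u (k + 1)).1 :=
      isComplemented_iSup_inf_of_finite_range (isComplemented_biSup_of_forall_seq hseq)
        (ih.2.finite_range_v.subset (range_comp_subset_range _ _)) fun _ => ih.2.isComplemented_v _
    exact ⟨ha, ih.2.add_sChi (by positivity) ha.isCompl_compl⟩

/-- For the encoded functions: `f - F > r` and `F > p - r` imply `f > p`. -/
theorem iSup_inf_v_inf_u_le {F : MP L} (hF : ∀ p q, q ≤ p → F.u p ⊓ F.v q = ⊥)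
    (hu : Antitone u) (r p : ℚ) : (⨆ t, u t ⊓ F.v (t - r)) ⊓ F.u (p - r) ≤ u p := by
  rw [iSup_inf_eq]
  refine iSup_le fun t => ?_
  rcases le_total p t with h | h
  · exact inf_le_left.trans (inf_le_left.trans (hu h))
  · calc _ ≤ F.u (p - r) ⊓ F.v (t - r) := le_inf inf_le_right (inf_le_left.trans inf_le_right)
      _ = ⊥ := hF _ _ (by linarith)
      _ ≤ u p := bot_le

theorem decompSeq_u_le (hu : Antitone u) (hneg : ∀ p < 0, u p = ⊤)
    (hS : ∀ k, IsMeasPair (decompSeq u k).2) (k : ℕ) (p : ℚ) :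
    (decompSeq u k).2.u p ≤ u p := by
  induction k generalizing p with
  | zero =>
    change (sChi 1 (u 1) (u 1)ᶜ).u p ≤ u p
    rw [sChi_u_of_pos one_pos]
    split_ifs with h0 h1
    · exact (hneg p h0).ge
    · exact hu (by linarith)
    · exact bot_le
  | succ k ih =>
    rw [decompSeq_succ_u (hS k).2.2.1]
    exact sup_le (ih p) (iSup_inf_v_inf_u_le (hS k).1 hu _ p)

theorem decompSeq_inf_v_le_u {p' m : ℚ} {k₀ : ℕ}
    (hS : ∀ k, IsNonnegSimple (decompSeq u k).2) (hk₀ : 1 / ((k₀ : ℚ) + 2) ≤ p' - m)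
    {k : ℕ} (hk : k₀ ≤ k) :
    u p' ⊓ (decompSeq u k).2.v m ≤
      (decompSeq u k).2.u (harmonic (k + 1) - harmonic (k₀ + 1) - 1) := by
  induction k, hk using Nat.le_induction with
  | base => rw [(hS k₀).u_eq_top _ (by linarith)]; exact le_top
  | succ k hk ih =>
    have hS' := (hS k).isMeasPair
    have hδ : 1 / ((k : ℚ) + 2) ≤ p' - m :=
      hk₀.trans' (one_div_le_one_div_of_le (by positivity)
        (by exact_mod_cast Nat.add_le_add_right hk 2))
    have ha : u p' ⊓ (decompSeq u k).2.v m ≤ (decompSeq u (k + 1)).1 :=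
      le_iSup_of_le p' (inf_le_inf_left _ (monotone_of_eq_iSup_lt hS'.2.2.2 (by linarith)))
    have hshift : harmonic (k + 1 + 1) - harmonic (k₀ + 1) - 1 - 1 / ((k : ℚ) + 2) =
        harmonic (k + 1) - harmonic (k₀ + 1) - 1 := by
      rw [harmonic_succ]; push_cast; ring
    rw [decompSeq_succ_u hS'.2.2.1, hshift]
    calc u p' ⊓ (decompSeq u (k + 1)).2.v m ≤ u p' ⊓ (decompSeq u k).2.v m :=
          inf_le_inf_left _ ((decompSeq_le_succ hS').2 m)
      _ ≤ _ := le_sup_of_le_right (le_inf ha ih)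

theorem le_iSup_decompSeq_u (hR3 : ∀ p, u p = ⨆ s, ⨆ _ : p < s, u s)
    (hS : ∀ k, IsNonnegSimple (decompSeq u k).2) (p : ℚ) :
    u p ≤ ⨆ k, (decompSeq u k).2.u p := by
  rw [hR3 p]
  refine iSup₂_le fun p' hp' => ?_
  obtain ⟨m, hpm, hmp'⟩ := exists_between hp'
  obtain ⟨k₀, hk₀⟩ : ∃ k₀ : ℕ, 1 / ((k₀ : ℚ) + 2) ≤ p' - m := by
    obtain ⟨n, hn⟩ := exists_nat_one_div_lt (show (0 : ℚ) < p' - m by linarith)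
    exact ⟨n, hn.le.trans' (one_div_le_one_div_of_le (by positivity) (by linarith))⟩
  have hH := tendsto_harmonic_atTop.comp (tendsto_add_atTop_nat 1)
  obtain ⟨k, hm, hk⟩ :=
    ((hH.eventually_ge_atTop (m + harmonic (k₀ + 1) + 1)).and (eventually_ge_atTop k₀)).exists
  have hS' := (hS k).isMeasPair
  calc u p' = u p' ⊓ ((decompSeq u k).2.u p ⊔ (decompSeq u k).2.v m) := by
        rw [hS'.2.1 p m (by linarith), inf_top_eq]
    _ = (u p' ⊓ (decompSeq u k).2.u p) ⊔ (u p' ⊓ (decompSeq u k).2.v m) := inf_sup_left _ _ _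
    _ ≤ (decompSeq u k).2.u p ⊔
          ((decompSeq u k).2.u (harmonic (k + 1) - harmonic (k₀ + 1) - 1) ⊓
            (decompSeq u k).2.v m) :=
        sup_le_sup inf_le_right (le_inf (decompSeq_inf_v_le_u hS hk₀ hk) inf_le_right)
    _ = (decompSeq u k).2.u p := by
        rw [hS'.1 _ _ (by simp only [Function.comp_apply] at hm; linarith), sup_bot_eq]
    _ ≤ ⨆ k, (decompSeq u k).2.u p := le_iSup (fun k => (decompSeq u k).2.u p) k

end Decomposition

theorem decomposition_of_nonnegative_general {L : Type*} [Order.Frame L]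
    (f : MP L) (hf : IsMeasPair f) (hnn : f.v 0 = ⊥)
    (hcseq : ∀ g : ℕ → ℚ, IsCompl (⨆ m, f.u (g m)) (⨆ m, f.u (g m))ᶜ) :
    (∀ k, IsCompl (decompSeq f.u k).1 ((decompSeq f.u k).1)ᶜ) ∧
    (∀ k, ((decompSeq f.u k).2).le ((decompSeq f.u (k + 1)).2)) ∧
    (∀ k, ∀ p : ℚ, ((decompSeq f.u k).2).u p ≤ f.u p) ∧
    (∀ p : ℚ, f.u p = ⨆ k, ((decompSeq f.u k).2).u p) := by
  obtain ⟨-, hR2, hR3, -⟩ := hf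
  have hneg : ∀ p < 0, f.u p = ⊤ := fun p hp => by simpa [hnn] using hR2 p 0 hp
  have hspec := decompSeq_isComplemented_isNonnegSimple fun g => ⟨_, hcseq g⟩
  have hle := decompSeq_u_le (antitone_of_eq_iSup_gt hR3) hneg fun k => (hspec k).2.isMeasPair
  refine ⟨fun k => (hspec k).1.isCompl_compl, fun k => decompSeq_le_succ (hspec k).2.isMeasPair,
    hle, fun p => ?_⟩
  exact le_antisymm (le_iSup_decompSeq_u hR3 (fun k => (hspec k).2) p) (iSup_le fun k => hle k p)

/-- Decomposition of a nonnegative measurable function as the limit (= supremum) of an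
increasing sequence of nonnegative simple functions: each `a_k` is complemented, the
sequence `(f_k)` is increasing, `f_k ≤ f` (i.e. `u_{f_k} p ≤ u p` for all `p`), and
`u p = ⨆_k u_{f_k} p` for every rational `p`. -/
theorem decomposition_of_nonnegative {L : Type*} [Order.Frame L]
    (f : MP L) (hf : IsMeasPair f) (hnn : f.v 0 = ⊥)
    (hc : ∀ r : ℚ, IsCompl (f.u r) (f.u r)ᶜ)
    (hcseq : ∀ g : ℕ → ℚ, IsCompl (⨆ m, f.u (g m)) (⨆ m, f.u (g m))ᶜ) :
    (∀ k, IsCompl (decompSeq f.u k).1 ((decompSeq f.u k).1)ᶜ) ∧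
    (∀ k, ((decompSeq f.u k).2).le ((decompSeq f.u (k + 1)).2)) ∧
    (∀ k, ∀ p : ℚ, ((decompSeq f.u k).2).u p ≤ f.u p) ∧
    (∀ p : ℚ, f.u p = ⨆ k, ((decompSeq f.u k).2).u p) :=
  decomposition_of_nonnegative_general f hf hnn hcseq
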